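/- Let X = (V,E) be a digraph, e = (u,v) ∈ E an edge, X∖e the digraph obtained by deleting e, and X/e the digraph obtained by contracting e. For a positive integer m let N_X(m) denote the number of pairs (f, σ) where f : V → {1,…,m} and σ is an (f,X)-friendly V-listing. Then for every m, N_X(m) = N_{X∖e}(m) − N_{X/e}(m). -/

import Mathlib

/-- A listing `l = (σ_1, …, σ_n)` is `(f,X)`-friendly if
`f(σ_1) ≤ f(σ_2) ≤ ⋯ ≤ f(σ_n)` and `f(σ_j) < f(σ_{j+1})` for each `j ∈ [n-1]`
with `(σ_j, σ_{j+1})` an edge of `X`. -/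
def Friendly {V : Type*} (E : V → V → Prop) (f : V → ℕ) (l : List V) : Prop :=
  l.Chain' (fun u v => f u ≤ f v) ∧
  ∀ i : ℕ, ∀ (h1 : 1 ≤ i) (h2 : i ≤ l.length - 1),
    E (l.get ⟨i - 1, by omega⟩) (l.get ⟨i, by omega⟩) →
      f (l.get ⟨i - 1, by omega⟩) < f (l.get ⟨i, by omega⟩)

/-- `N_X(m)`: the number of pairs `(f, σ)` with `f : V → {1, …, m}` a coloring and `σ`
an `(f,X)`-friendly `V`-listing (the value of the Redei-Berge polynomial at `m`). -/
noncomputable def RBCount (V : Type*) [Fintype V] (E : V → V → Prop) (m : ℕ) : ℕ :=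
  Nat.card {p : (V → ℕ) × List V //
    (∀ x, 1 ≤ p.1 x ∧ p.1 x ≤ m) ∧ p.2.Nodup ∧ (∀ x, x ∈ p.2) ∧ Friendly E p.1 p.2}

/-- Edge relation of the deletion `X ∖ e` of the edge `e = (u,v)`. -/
def delEdge {V : Type*} (E : V → V → Prop) (u v : V) (a b : V) : Prop :=
  E a b ∧ ¬(a = u ∧ b = v)

/-- Edge relation of the contraction `X/e` of the edge `e = (u,v)`; the vertex set is
`(V ∖ {u,v}) ⊕ Unit`, where the extra vertex `Sum.inr ()` is the contracted vertex `e`. -/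
def contractEdge {V : Type*} (E : V → V → Prop) (u v : V) :
    {w : V // w ≠ u ∧ w ≠ v} ⊕ Unit → {w : V // w ≠ u ∧ w ≠ v} ⊕ Unit → Prop
  | Sum.inl a, Sum.inl b => E a.1 b.1
  | Sum.inl a, Sum.inr _ => E a.1 u
  | Sum.inr _, Sum.inl b => E v b.1
  | Sum.inr _, Sum.inr _ => False

/-! Every `(f, X)`-friendly pair is `(f, X ∖ e)`-friendly, and an `(f, X ∖ e)`-friendly pair fails
to be `(f, X)`-friendly exactly when `v` immediately follows `u` in the listing and `f u = f v`.
Such pairs correspond bijectively to the `X / e`-friendly pairs: replace the contracted vertex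
`e` by the two consecutive vertices `u, v`, both coloured like `e`. An edge of `X / e` into or out
of `e` is an edge of `X ∖ e` into `u` or out of `v`, so friendliness is preserved both ways. -/

namespace RedeiBerge

section Friendly

variable {V : Type*} {E E' : V → V → Prop} {f : V → ℕ} {l : List V} {m : ℕ}

def FriendlyStep (E : V → V → Prop) (f : V → ℕ) (a b : V) : Prop :=
  f a ≤ f b ∧ (E a b → f a < f b)

theorem friendly_iff_isChain : Friendly E f l ↔ l.IsChain (FriendlyStep E f) := by
  rw [Friendly, List.Chain']
  constructor
  · rintro ⟨hle, hlt⟩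
    rw [List.isChain_iff_getElem] at hle ⊢
    exact fun i hi => ⟨hle i hi, hlt (i + 1) (by omega) (by omega)⟩
  · intro h
    refine ⟨h.imp fun _ _ => And.left, fun i h1 h2 hE => ?_⟩
    obtain ⟨j, rfl⟩ : ∃ j, i = j + 1 := ⟨i - 1, by omega⟩
    exact (List.isChain_iff_getElem.mp h j (by omega)).2 hE

theorem isChain_congr_of_nodup {α : Type*} {R S : α → α → Prop} {l : List α} (hl : l.Nodup)
    (h : ∀ a b, a ≠ b → (R a b ↔ S a b)) : l.IsChain R ↔ l.IsChain S := by
  have hne : l.IsChain (· ≠ ·) := List.Pairwise.isChain hl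
  rw [List.isChain_iff_getElem] at hne ⊢
  rw [List.isChain_iff_getElem]
  exact forall₂_congr fun i hi => h _ _ (hne i hi)

theorem eq_append_cons_cons_of_friendly_delEdge {u v : V}
    (hdel : Friendly (delEdge E u v) f l) (hE : ¬ Friendly E f l) :
    ∃ l₁ l₂, l = l₁ ++ u :: v :: l₂ ∧ f u = f v := by
  rw [friendly_iff_isChain] at hdel hE
  rw [List.isChain_iff_forall_rel_of_append_cons_cons] at hE
  push Not at hE
  obtain ⟨a, b, l₁, l₂, rfl, hab⟩ := hE
  obtain ⟨hle, hlt⟩ := List.isChain_iff_forall_rel_of_append_cons_cons.mp hdel rfl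
  obtain ⟨hEab, hge⟩ : E a b ∧ f b ≤ f a := by
    simp only [FriendlyStep, not_and, Classical.not_imp, not_lt] at hab
    exact hab hle
  obtain ⟨rfl, rfl⟩ : a = u ∧ b = v := by
    by_contra h
    exact absurd (hlt ⟨hEab, h⟩) (not_lt.mpr hge)
  exact ⟨l₁, l₂, rfl, le_antisymm hle hge⟩

def friendlyPairs (E : V → V → Prop) (m : ℕ) : Set ((V → ℕ) × List V) :=
  {p | (∀ x, 1 ≤ p.1 x ∧ p.1 x ≤ m) ∧ p.2.Nodup ∧ (∀ x, x ∈ p.2) ∧ Friendly E p.1 p.2}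

theorem mem_friendlyPairs {p : (V → ℕ) × List V} :
    p ∈ friendlyPairs E m ↔
      (∀ x, 1 ≤ p.1 x ∧ p.1 x ≤ m) ∧ p.2.Nodup ∧ (∀ x, x ∈ p.2) ∧ Friendly E p.1 p.2 :=
  Iff.rfl

theorem rbCount_eq_ncard [Fintype V] (E : V → V → Prop) (m : ℕ) :
    RBCount V E m = (friendlyPairs E m).ncard := by
  rw [← Nat.card_coe_set_eq]
  rfl

theorem friendlyPairs_finite [Finite V] (E : V → V → Prop) (m : ℕ) :
    (friendlyPairs E m).Finite := by
  have : Fintype V := Fintype.ofFinite V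
  refine ((Set.Finite.pi fun _ : V => Set.finite_Icc 1 m).prod
    (List.finite_length_le V (Fintype.card V))).subset ?_
  rintro ⟨f, l⟩ ⟨hf, hl, -, -⟩
  exact ⟨fun x _ => hf x, hl.length_le_card⟩

theorem friendlyPairs_anti (h : ∀ a b, E' a b → E a b) :
    friendlyPairs E m ⊆ friendlyPairs E' m := by
  rintro ⟨f, l⟩ ⟨hf, hl, hcov, hfr⟩
  refine ⟨hf, hl, hcov, ?_⟩
  rw [friendly_iff_isChain] at hfr ⊢
  exact hfr.imp fun a b hab => ⟨hab.1, fun h' => hab.2 (h a b h')⟩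

end Friendly

abbrev Contracted {V : Type*} (u v : V) : Type _ := {w : V // w ≠ u ∧ w ≠ v} ⊕ Unit

namespace Contracted

variable {V : Type*} {u v : V}

def first : Contracted u v → V := Sum.elim Subtype.val fun _ => u

def last : Contracted u v → V := Sum.elim Subtype.val fun _ => v

def expand : Contracted u v → List V := Sum.elim (fun a => [a.1]) fun _ => [u, v]

def expandList (l : List (Contracted u v)) : List V := l.flatMap expand

theorem nodup_expand (huv : u ≠ v) (w : Contracted u v) : w.expand.Nodup := by
  rcases w with _ | _ <;> simp [expand, huv]

theorem isChain_expandList {R : V → V → Prop} (hR : R u v) {l : List (Contracted u v)} :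
    (expandList l).IsChain R ↔ l.IsChain fun w w' => R w.last w'.first := by
  have hexpand : ∀ w : Contracted u v, w.expand.IsChain R ∧
      w.expand.getLast? = some w.last ∧ w.expand.head? = some w.first := by
    rintro (_ | _) <;> simp [expand, last, first, hR]
  rw [expandList, List.flatMap_def, List.isChain_flatten, List.isChain_map]
  · simp only [List.mem_map, forall_exists_index, and_imp, forall_apply_eq_imp_iff₂,
      (hexpand _).1, implies_true, true_and, (hexpand _).2.1, (hexpand _).2.2, Option.mem_def,
      Option.some.injEq, forall_eq']
  · simp only [List.mem_map, not_exists, not_and]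
    intro w _ h
    simpa [h] using (hexpand w).2.2

theorem expandList_append_inr_cons (l₁ l₂ : List (Contracted u v)) :
    expandList (l₁ ++ Sum.inr () :: l₂) = expandList l₁ ++ u :: v :: expandList l₂ := by
  simp [expandList, expand]

variable [DecidableEq V]

def collapse (u v : V) (x : V) : Contracted u v :=
  if h : x ≠ u ∧ x ≠ v then Sum.inl ⟨x, h⟩ else Sum.inr ()

def collapseList (u v : V) (l : List V) : List (Contracted u v) :=
  (l.filter (· ≠ v)).map (collapse u v)

theorem collapse_of_ne {x : V} (hu : x ≠ u) (hv : x ≠ v) :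
    collapse u v x = Sum.inl ⟨x, hu, hv⟩ :=
  dif_pos ⟨hu, hv⟩

@[simp] theorem collapse_left : collapse u v u = Sum.inr () := dif_neg (by simp)

@[simp] theorem collapse_right : collapse u v v = Sum.inr () := dif_neg (by simp)

@[simp] theorem collapse_first (w : Contracted u v) : collapse u v w.first = w := by
  rcases w with ⟨x, hu, hv⟩ | ⟨⟩
  · exact collapse_of_ne hu hv
  · exact collapse_left

@[simp] theorem collapse_last (w : Contracted u v) : collapse u v w.last = w := by
  rcases w with ⟨x, hu, hv⟩ | ⟨⟩
  · exact collapse_of_ne hu hv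
  · exact collapse_right

theorem collapse_surjective : Function.Surjective (collapse u v) :=
  fun w => ⟨w.first, collapse_first w⟩

theorem mem_expand {x : V} {w : Contracted u v} : x ∈ w.expand ↔ collapse u v x = w := by
  unfold collapse
  rcases w with ⟨y, hu, hv⟩ | ⟨⟩ <;> split_ifs <;> simp [expand] <;> grind

theorem mem_expandList {x : V} {l : List (Contracted u v)} :
    x ∈ expandList l ↔ collapse u v x ∈ l := by
  simp [expandList, mem_expand]

theorem disjoint_expand {w w' : Contracted u v} (h : w ≠ w') : w.expand.Disjoint w'.expand :=
  fun _ hx hx' => h ((mem_expand.1 hx).symm.trans (mem_expand.1 hx'))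

theorem nodup_expandList_iff (huv : u ≠ v) {l : List (Contracted u v)} :
    (expandList l).Nodup ↔ l.Nodup := by
  rw [expandList, List.nodup_flatMap]
  refine ⟨fun h => h.2.imp fun {w w'} hd heq => ?_,
    fun h => ⟨fun w _ => nodup_expand huv w, h.imp disjoint_expand⟩⟩
  subst heq
  exact hd (mem_expand.2 (collapse_first w)) (mem_expand.2 (collapse_first w))

theorem expandList_map_collapse {l : List V} (h : ∀ x ∈ l, x ≠ u ∧ x ≠ v) :
    expandList (l.map (collapse u v)) = l := by
  conv_rhs => rw [← List.flatMap_singleton' l]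
  rw [expandList, List.flatMap_map]
  exact List.flatMap_congr fun x hx => by rw [collapse_of_ne (h x hx).1 (h x hx).2]; rfl

theorem collapseList_expandList (huv : u ≠ v) (l : List (Contracted u v)) :
    collapseList u v (expandList l) = l := by
  conv_rhs => rw [← List.flatMap_singleton' l]
  rw [collapseList, expandList, List.filter_flatMap, List.map_flatMap]
  refine List.flatMap_congr fun w _ => ?_
  rcases w with ⟨x, hu, hv⟩ | ⟨⟩
  · simp [expand, hv, collapse_of_ne hu hv]
  · simp [expand, huv]

theorem expandList_injective (huv : u ≠ v) :
    Function.Injective (expandList : List (Contracted u v) → List V) :=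
  Function.LeftInverse.injective (collapseList_expandList huv)

end Contracted

open Contracted

section Contraction

variable {V : Type*} {E : V → V → Prop} {u v : V} {m : ℕ}

-- `hne` excludes `w = w' = e`, where `delEdge` sees the edge `(v, u)` if there is one.
theorem delEdge_last_first_iff {w w' : Contracted u v} (hne : w ≠ w') :
    delEdge E u v w.last w'.first ↔ contractEdge E u v w w' := by
  rcases w with ⟨a, hau, hav⟩ | ⟨⟩ <;> rcases w' with ⟨b, hbu, hbv⟩ | ⟨⟩
  all_goals simp_all [delEdge, contractEdge, last, first]

variable [DecidableEq V]

theorem friendly_expandList_iff {g : Contracted u v → ℕ} {l : List (Contracted u v)}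
    (hl : l.Nodup) :
    Friendly (delEdge E u v) (g ∘ collapse u v) (expandList l) ↔
      Friendly (contractEdge E u v) g l := by
  have hstep : FriendlyStep (delEdge E u v) (g ∘ collapse u v) u v := by
    simp [FriendlyStep, delEdge]
  rw [friendly_iff_isChain, friendly_iff_isChain, isChain_expandList hstep]
  refine isChain_congr_of_nodup hl fun w w' hne => ?_
  simp only [FriendlyStep, Function.comp_apply, collapse_last, collapse_first,
    delEdge_last_first_iff hne]

theorem not_friendly_expandList (he : E u v) {g : Contracted u v → ℕ}
    {l : List (Contracted u v)} (hl : Sum.inr () ∈ l) :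
    ¬ Friendly E (g ∘ collapse u v) (expandList l) := by
  obtain ⟨l₁, l₂, rfl⟩ := List.append_of_mem hl
  rw [friendly_iff_isChain, expandList_append_inr_cons,
    List.isChain_iff_forall_rel_of_append_cons_cons]
  intro h
  simpa using (h rfl).2 he

theorem comp_first_comp_collapse {f : V → ℕ} (hf : f u = f v) :
    (f ∘ first) ∘ collapse u v = f := by
  funext x
  by_cases hx : x ≠ u ∧ x ≠ v
  · simp [collapse_of_ne hx.1 hx.2, first]
  · obtain rfl | rfl : x = u ∨ x = v := by tauto
    · simp [first]
    · simp [first, hf]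

def expandPair (q : (Contracted u v → ℕ) × List (Contracted u v)) : (V → ℕ) × List V :=
  (q.1 ∘ collapse u v, expandList q.2)

theorem expandPair_injective (huv : u ≠ v) :
    Function.Injective (expandPair : (Contracted u v → ℕ) × List (Contracted u v) → _) :=
  Prod.map_injective.2 ⟨collapse_surjective.injective_comp_right, expandList_injective huv⟩

theorem expandPair_mem_friendlyPairs_delEdge_iff (huv : u ≠ v)
    {q : (Contracted u v → ℕ) × List (Contracted u v)} :
    expandPair q ∈ friendlyPairs (delEdge E u v) m ↔
      q ∈ friendlyPairs (contractEdge E u v) m := by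
  obtain ⟨g, l⟩ := q
  simp only [mem_friendlyPairs, expandPair, Function.comp_apply,
    collapse_surjective.forall, nodup_expandList_iff huv, mem_expandList]
  exact and_congr_right fun _ => and_congr_right fun hl => and_congr_right fun _ =>
    friendly_expandList_iff hl

theorem image_expandPair (huv : u ≠ v) (he : E u v) :
    expandPair '' friendlyPairs (contractEdge E u v) m =
      friendlyPairs (delEdge E u v) m \ friendlyPairs E m := by
  ext ⟨f, σ⟩
  constructor
  · rintro ⟨q, hq, hqp⟩
    rw [← hqp]
    exact ⟨(expandPair_mem_friendlyPairs_delEdge_iff huv).2 hq,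
      fun h => not_friendly_expandList he (hq.2.2.1 _) h.2.2.2⟩
  · rintro ⟨hdel, hE⟩
    have hfr : ¬ Friendly E f σ := fun h => hE ⟨hdel.1, hdel.2.1, hdel.2.2.1, h⟩
    obtain ⟨l₁, l₂, rfl, hf⟩ := eq_append_cons_cons_of_friendly_delEdge hdel.2.2.2 hfr
    have hout : ∀ x ∈ l₁ ++ l₂, x ≠ u ∧ x ≠ v := by
      have hnodup := hdel.2.1
      rw [List.nodup_middle, List.nodup_cons, List.nodup_middle, List.nodup_cons] at hnodup
      grind
    have hpre : expandPair (f ∘ first, l₁.map (collapse u v) ++ Sum.inr () :: l₂.map (collapse u v))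
        = (f, l₁ ++ u :: v :: l₂) := by
      refine Prod.ext (comp_first_comp_collapse hf) ?_
      rw [expandPair, expandList_append_inr_cons,
        expandList_map_collapse fun x hx => hout x (List.mem_append_left _ hx),
        expandList_map_collapse fun x hx => hout x (List.mem_append_right _ hx)]
    exact ⟨_, (expandPair_mem_friendlyPairs_delEdge_iff huv).1 (hpre ▸ hdel), hpre⟩

end Contraction

end RedeiBerge

theorem deletion_contraction_general {V : Type*} [Fintype V] [DecidableEq V]
    (E : V → V → Prop) (hE : ∀ x, ¬ E x x)
    (u v : V) (he : E u v) (m : ℕ) :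
    (RBCount V E m : ℤ) =
      (RBCount V (delEdge E u v) m : ℤ) -
        (RBCount ({w : V // w ≠ u ∧ w ≠ v} ⊕ Unit) (contractEdge E u v) m : ℤ) := by
  have huv : u ≠ v := fun h => hE u (h ▸ he)
  have hcard := Set.ncard_sdiff_add_ncard_of_subset
    (RedeiBerge.friendlyPairs_anti (E := E) (E' := delEdge E u v) (m := m) fun _ _ h => h.1)
    (RedeiBerge.friendlyPairs_finite (delEdge E u v) m)
  rw [← RedeiBerge.image_expandPair huv he,
    Set.ncard_image_of_injective _ (RedeiBerge.expandPair_injective huv)] at hcard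
  simp only [RedeiBerge.rbCount_eq_ncard]
  omega

/-- Deletion-contraction for the Redei-Berge polynomial:
`N_X(m) = N_{X∖e}(m) − N_{X/e}(m)` for every positive integer `m`. -/
theorem deletion_contraction {V : Type*} [Fintype V] [DecidableEq V]
    (E : V → V → Prop) (hE : ∀ x, ¬ E x x)
    (u v : V) (he : E u v) (m : ℕ) (hm : 1 ≤ m) :
    (RBCount V E m : ℤ) =
      (RBCount V (delEdge E u v) m : ℤ) -
        (RBCount ({w : V // w ≠ u ∧ w ≠ v} ⊕ Unit) (contractEdge E u v) m : ℤ) :=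
  deletion_contraction_general E hE u v he m
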